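/- Let f, g be closed convex proper functions on R^n, α > 0, and let the DRS-fg iteration be x^{k+1} = prox_{αf}(x^k − α u^k), u^{k+1} = prox_{α^{-1} g*}(u^k + (2x^{k+1} − x^k)/α). Then the ergodic iterates x̄^K, ū^K satisfy L(x̄^K, u) − L(x, ū^K) ≤ (1/(α(K+1)))(‖x^0 − x‖² + α²‖u^0 − u‖²) for all x ∈ dom f, u ∈ dom g*, where L(x,u) = f(x) + ⟨u,x⟩ − g*(u). -/

import Mathlib

open Finset RealInnerProductSpace

noncomputable section

/-- A closed convex proper function, modeled as a real-valued function `f` on a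
nonempty convex domain `D` with closed epigraph. -/
def IsCCP {n : ℕ} (D : Set (EuclideanSpace ℝ (Fin n)))
    (f : EuclideanSpace ℝ (Fin n) → ℝ) : Prop :=
  D.Nonempty ∧ ConvexOn ℝ D f ∧
    IsClosed {p : EuclideanSpace ℝ (Fin n) × ℝ | p.1 ∈ D ∧ f p.1 ≤ p.2}

/-- `p` is the proximal point of `f` (with domain `D`) at `x`. -/
def IsProxOn {n : ℕ} (D : Set (EuclideanSpace ℝ (Fin n)))
    (f : EuclideanSpace ℝ (Fin n) → ℝ) (x p : EuclideanSpace ℝ (Fin n)) : Prop :=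
  p ∈ D ∧ ∀ y ∈ D, f p + (1 / 2) * ‖p - x‖ ^ 2 ≤ f y + (1 / 2) * ‖y - x‖ ^ 2

/-- `(Dgs, gs)` is the Fenchel conjugate of `(Dg, g)`. -/
def IsConjugateOn {n : ℕ} (Dg : Set (EuclideanSpace ℝ (Fin n)))
    (g : EuclideanSpace ℝ (Fin n) → ℝ) (Dgs : Set (EuclideanSpace ℝ (Fin n)))
    (gs : EuclideanSpace ℝ (Fin n) → ℝ) : Prop :=
  ∀ u, (u ∈ Dgs ↔ BddAbove ((fun x => ⟪u, x⟫ - g x) '' Dg)) ∧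
    (u ∈ Dgs → IsLUB ((fun x => ⟪u, x⟫ - g x) '' Dg) (gs u))


/-!
Put `zₖ = (xᵏ - α uᵏ) - (x - α u)`. The proximal steps say that `xᵏ - α uᵏ - xᵏ⁺¹` is a
subgradient of `α f` at `xᵏ⁺¹` and `uᵏ + α⁻¹ (2xᵏ⁺¹ - xᵏ) - uᵏ⁺¹` one of `α⁻¹ g*` at `uᵏ⁺¹`.
Adding the two subgradient inequalities, the gap `L(xᵏ⁺¹, u) - L(x, uᵏ⁺¹)` is at most
`α⁻¹ ⟪zₖ - zₖ₊₁, zₖ₊₁⟫`. These inner products sum to `½ (‖z₀‖² - ‖z_K‖² - ∑ ‖zₖ - zₖ₊₁‖²)`,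
and Cauchy–Schwarz applied to `z₀ = z_K + ∑ (zₖ - zₖ₊₁)` bounds this by `½ K/(K+1) ‖z₀‖²`.
The gap is convex in `(x, u)`, so Jensen's inequality passes the bound to the averages.
-/

theorem IsProxOn.add_inner_le {n : ℕ} {D : Set (EuclideanSpace ℝ (Fin n))}
    {h : EuclideanSpace ℝ (Fin n) → ℝ} (hh : ConvexOn ℝ D h) {z p : EuclideanSpace ℝ (Fin n)}
    (hp : IsProxOn D h z p) {y : EuclideanSpace ℝ (Fin n)} (hy : y ∈ D) :
    h p + ⟪z - p, y - p⟫ ≤ h y := by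
  -- compare `p` with the points `p + t (y - p)` of the segment and let `t → 0⁺`
  have hsmall : ∀ t ∈ Set.Ioo (0 : ℝ) 1, h p + ⟪z - p, y - p⟫ ≤ h y + t / 2 * ‖y - p‖ ^ 2 := by
    rintro t ⟨ht0, ht1⟩
    have hseg : p + t • (y - p) = (1 - t) • p + t • y := by module
    have hmin := hp.2 _ (hseg ▸ hh.1 hp.1 hy (by linarith) ht0.le (by ring))
    have hconv : h (p + t • (y - p)) ≤ (1 - t) * h p + t * h y :=
      hseg ▸ hh.2 hp.1 hy (by linarith) ht0.le (by ring)
    have hexp : ‖p + t • (y - p) - z‖ ^ 2 =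
        ‖p - z‖ ^ 2 - 2 * t * ⟪z - p, y - p⟫ + t ^ 2 * ‖y - p‖ ^ 2 := by
      rw [show p + t • (y - p) - z = (p - z) + t • (y - p) by abel, norm_add_sq_real,
        norm_smul, mul_pow, Real.norm_eq_abs, sq_abs, real_inner_smul_right, ← neg_sub z p,
        inner_neg_left]
      ring
    refine le_of_mul_le_mul_left ?_ ht0
    linarith
  refine ge_of_tendsto ?_ (Filter.eventually_of_mem (Ioo_mem_nhdsGT one_pos) hsmall)
  have hcont : Continuous fun t : ℝ => h y + t / 2 * ‖y - p‖ ^ 2 := by fun_prop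
  simpa using (hcont.tendsto 0).mono_left nhdsWithin_le_nhds

theorem IsConjugateOn.convexOn {n : ℕ} {Dg Dgs : Set (EuclideanSpace ℝ (Fin n))}
    {g gs : EuclideanSpace ℝ (Fin n) → ℝ} (hconj : IsConjugateOn Dg g Dgs gs) :
    ConvexOn ℝ Dgs gs := by
  have hcomb : ∀ u ∈ Dgs, ∀ v ∈ Dgs, ∀ a b : ℝ, 0 ≤ a → 0 ≤ b → a + b = 1 →
      a * gs u + b * gs v ∈ upperBounds ((fun x => ⟪a • u + b • v, x⟫ - g x) '' Dg) := by
    rintro u hu v hv a b ha hb hab _ ⟨x, hx, rfl⟩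
    have hux := ((hconj u).2 hu).1 ⟨x, hx, rfl⟩
    have hvx := ((hconj v).2 hv).1 ⟨x, hx, rfl⟩
    simp only [inner_add_left, real_inner_smul_left] at hux hvx ⊢
    linear_combination a * hux + b * hvx + g x * hab
  have hmem : ∀ u ∈ Dgs, ∀ v ∈ Dgs, ∀ a b : ℝ, 0 ≤ a → 0 ≤ b → a + b = 1 →
      a • u + b • v ∈ Dgs := fun u hu v hv a b ha hb hab =>
    (hconj _).1.2 ⟨_, hcomb u hu v hv a b ha hb hab⟩
  exact ⟨hmem, fun u hu v hv a b ha hb hab =>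
    ((hconj _).2 (hmem u hu v hv a b ha hb hab)).2 (hcomb u hu v hv a b ha hb hab)⟩

theorem norm_sub_sq_le_mul_sum_norm_sub_sq {F : Type*} [SeminormedAddCommGroup F] (w : ℕ → F)
    (N : ℕ) : ‖w 0 - w N‖ ^ 2 ≤ N * ∑ k ∈ range N, ‖w k - w (k + 1)‖ ^ 2 := by
  have htri : ‖w 0 - w N‖ ≤ ∑ k ∈ range N, ‖w k - w (k + 1)‖ := by
    rw [← sum_range_sub']; exact norm_sum_le _ _
  calc ‖w 0 - w N‖ ^ 2 ≤ (∑ k ∈ range N, ‖w k - w (k + 1)‖) ^ 2 := by gcongr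
    _ ≤ N * ∑ k ∈ range N, ‖w k - w (k + 1)‖ ^ 2 := by
      simpa using sq_sum_le_card_mul_sum_sq (s := range N) (f := fun k => ‖w k - w (k + 1)‖)

theorem norm_sq_le_succ_mul_sum_norm_sub_sq {F : Type*} [SeminormedAddCommGroup F] (z : ℕ → F)
    (K : ℕ) : ‖z 0‖ ^ 2 ≤ (K + 1) * (∑ k ∈ range K, ‖z k - z (k + 1)‖ ^ 2 + ‖z K‖ ^ 2) := by
  -- extending `z` by `0` after `K` makes `z K` one more increment
  have := norm_sub_sq_le_mul_sum_norm_sub_sq (fun k => if k ≤ K then z k else 0) (K + 1)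
  rw [sum_range_succ, sum_congr rfl fun k hk => by
    rw [if_pos (mem_range.1 hk).le, if_pos (Nat.succ_le_of_lt (mem_range.1 hk))]] at this
  simpa using this

theorem norm_sub_smul_sub_sub_smul_sq_le {F : Type*} [SeminormedAddCommGroup F]
    [NormedSpace ℝ F] (α : ℝ) (a b c d : F) :
    ‖(a - α • c) - (b - α • d)‖ ^ 2 ≤ 2 * (‖a - b‖ ^ 2 + α ^ 2 * ‖c - d‖ ^ 2) := calc
  ‖(a - α • c) - (b - α • d)‖ ^ 2 = ‖(a - b) - α • (c - d)‖ ^ 2 := by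
    rw [smul_sub, sub_sub_sub_comm]
  _ ≤ (‖a - b‖ + ‖α • (c - d)‖) ^ 2 := by gcongr; exact norm_sub_le _ _
  _ ≤ 2 * (‖a - b‖ ^ 2 + ‖α • (c - d)‖ ^ 2) := add_sq_le
  _ = 2 * (‖a - b‖ ^ 2 + α ^ 2 * ‖c - d‖ ^ 2) := by
    rw [norm_smul, mul_pow, Real.norm_eq_abs, sq_abs]

theorem ConvexOn.map_finset_average_le {ι F : Type*} [AddCommGroup F] [Module ℝ F] {s : Set F}
    {φ : F → ℝ} (hφ : ConvexOn ℝ s φ) {t : Finset ι} (ht : t.Nonempty) {p : ι → F}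
    (hp : ∀ i ∈ t, p i ∈ s) :
    φ ((#t : ℝ)⁻¹ • ∑ i ∈ t, p i) ≤ (#t : ℝ)⁻¹ * ∑ i ∈ t, φ (p i) := by
  have hcard : (0 : ℝ) < #t := by exact_mod_cast ht.card_pos
  have := hφ.map_sum_le (w := fun _ => (#t : ℝ)⁻¹) (fun _ _ => by positivity)
    (by simp [hcard.ne']) hp
  simpa [← smul_sum, mul_sum] using this

section InnerProductSpace

variable {E : Type*} [NormedAddCommGroup E] [InnerProductSpace ℝ E]

def lagrangian (f gs : E → ℝ) (x u : E) : ℝ := f x + ⟪u, x⟫ - gs u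

theorem convexOn_lagrangian_sub_lagrangian {Df Dgs : Set E} {f gs : E → ℝ}
    (hf : ConvexOn ℝ Df f) (hgs : ConvexOn ℝ Dgs gs) (x u : E) :
    ConvexOn ℝ (Df ×ˢ Dgs) fun p => lagrangian f gs p.1 u - lagrangian f gs x p.2 := by
  refine ⟨hf.1.prod hgs.1, fun p hp q hq a b ha hb hab => ?_⟩
  have hfab := hf.2 hp.1 hq.1 ha hb hab
  have hgab := hgs.2 hp.2 hq.2 ha hb hab
  simp only [lagrangian, Prod.fst_add, Prod.snd_add, Prod.smul_fst, Prod.smul_snd, smul_eq_mul,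
    inner_add_left, inner_add_right, real_inner_smul_left, real_inner_smul_right] at hfab hgab ⊢
  linear_combination hfab + hgab + (f x + gs u) * hab

theorem drs_step_inner_eq (α : ℝ) (a b c d x u : E) :
    ⟪a - α • c - b, b - x⟫ + α * ⟪α • (c - d) + ((2 : ℝ) • b - a), d - u⟫ + α * (⟪u, b⟫ - ⟪d, x⟫)
      = ⟪(a - α • c) - (b - α • d), (b - α • d) - (x - α • u)⟫ := by
  simp only [inner_sub_left, inner_sub_right, inner_add_left, real_inner_smul_left,
    real_inner_smul_right, real_inner_comm b d, real_inner_comm b u]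
  ring

theorem drs_step_gap_le {α : ℝ} (hα : 0 < α) {f gs : E → ℝ} {a b c d x u : E}
    (hb : α * f b + ⟪(a - α • c) - b, x - b⟫ ≤ α * f x)
    (hd : α⁻¹ * gs d + ⟪(c + α⁻¹ • ((2 : ℝ) • b - a)) - d, u - d⟫ ≤ α⁻¹ * gs u) :
    lagrangian f gs b u - lagrangian f gs x d ≤
      α⁻¹ * ⟪(a - α • c) - (b - α • d), (b - α • d) - (x - α • u)⟫ := by
  have hb' : α * (f b - f x) ≤ ⟪a - α • c - b, b - x⟫ := by
    rw [← neg_sub b x, inner_neg_right] at hb; linarith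
  have hd' : gs d - gs u ≤ ⟪α • (c - d) + ((2 : ℝ) • b - a), d - u⟫ := by
    have hrw : c + α⁻¹ • ((2 : ℝ) • b - a) - d = α⁻¹ • (α • (c - d) + ((2 : ℝ) • b - a)) := by
      rw [smul_add, inv_smul_smul₀ hα.ne']; abel
    rw [hrw, ← neg_sub d u, inner_neg_right, real_inner_smul_left] at hd
    refine le_of_mul_le_mul_left ?_ (inv_pos.2 hα)
    rw [mul_sub]
    linarith
  rw [← drs_step_inner_eq, le_inv_mul_iff₀ hα, lagrangian, lagrangian]
  linarith [mul_le_mul_of_nonneg_left hd' hα.le]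

theorem two_mul_sum_inner_sub_succ_le (z : ℕ → E) (K : ℕ) :
    (K + 1) * (2 * ∑ k ∈ range K, ⟪z k - z (k + 1), z (k + 1)⟫) ≤ K * ‖z 0‖ ^ 2 := by
  have htel : 2 * ∑ k ∈ range K, ⟪z k - z (k + 1), z (k + 1)⟫ =
      ‖z 0‖ ^ 2 - (∑ k ∈ range K, ‖z k - z (k + 1)‖ ^ 2 + ‖z K‖ ^ 2) := by
    have hpol : ∀ v w : E, 2 * ⟪v - w, w⟫ = ‖v‖ ^ 2 - ‖w‖ ^ 2 - ‖v - w‖ ^ 2 := fun v w => by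
      rw [norm_sub_sq_real, inner_sub_left, real_inner_self_eq_norm_sq]; ring
    rw [mul_sum, sum_congr rfl fun k _ => hpol (z k) (z (k + 1)), sum_sub_distrib,
      sum_range_sub' (fun k => ‖z k‖ ^ 2)]
    ring
  rw [htel]
  nlinarith [norm_sq_le_succ_mul_sum_norm_sub_sq z K]

theorem average_Icc_le_of_le_inner_sub_succ (z : ℕ → E) {G : ℕ → ℝ} {α : ℝ} (hα : 0 < α)
    (hG : ∀ k, G (k + 1) ≤ α⁻¹ * ⟪z k - z (k + 1), z (k + 1)⟫) (K : ℕ) :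
    (K : ℝ)⁻¹ * ∑ k ∈ Icc 1 K, G k ≤ ‖z 0‖ ^ 2 / (2 * α * (K + 1)) := by
  have hsum : ∑ k ∈ Icc 1 K, G k ≤ α⁻¹ * ∑ k ∈ range K, ⟪z k - z (k + 1), z (k + 1)⟫ := calc
    ∑ k ∈ Icc 1 K, G k = ∑ k ∈ range K, G (k + 1) := by
      rw [range_eq_Ico, sum_Ico_add' G 0 K 1]; rfl
    _ ≤ _ := by rw [mul_sum]; exact sum_le_sum fun k _ => hG k
  have htel := two_mul_sum_inner_sub_succ_le z K
  rw [le_div_iff₀ (by positivity)]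
  calc (K : ℝ)⁻¹ * (∑ k ∈ Icc 1 K, G k) * (2 * α * (K + 1))
      ≤ (K : ℝ)⁻¹ * (α⁻¹ * ∑ k ∈ range K, ⟪z k - z (k + 1), z (k + 1)⟫) * (2 * α * (K + 1)) := by
        gcongr
    _ = (K : ℝ)⁻¹ * ((K + 1) * (2 * ∑ k ∈ range K, ⟪z k - z (k + 1), z (k + 1)⟫)) := by
        field_simp
    _ ≤ (K : ℝ)⁻¹ * (K * ‖z 0‖ ^ 2) := by gcongr
    _ ≤ ‖z 0‖ ^ 2 := by rw [← mul_assoc]; exact mul_le_of_le_one_left (sq_nonneg _) inv_mul_le_one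

end InnerProductSpace

theorem drs_fg_ergodic_rate_general (n K : ℕ) (hK : 1 ≤ K) (α : ℝ) (hα : 0 < α)
    (Df Dg Dgs : Set (EuclideanSpace ℝ (Fin n)))
    (f g gs : EuclideanSpace ℝ (Fin n) → ℝ)
    (hf : IsCCP Df f) (hconj : IsConjugateOn Dg g Dgs gs)
    (x u : ℕ → EuclideanSpace ℝ (Fin n))
    (hx : ∀ k, IsProxOn Df (fun v => α * f v) (x k - α • u k) (x (k + 1)))
    (hu : ∀ k, IsProxOn Dgs (fun v => α⁻¹ * gs v)
      (u k + α⁻¹ • ((2 : ℝ) • x (k + 1) - x k)) (u (k + 1))) :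
    ∀ xx ∈ Df, ∀ uu ∈ Dgs,
      (f ((K : ℝ)⁻¹ • ∑ k ∈ Icc 1 K, x k) +
          ⟪uu, (K : ℝ)⁻¹ • ∑ k ∈ Icc 1 K, x k⟫ - gs uu) -
        (f xx + ⟪(K : ℝ)⁻¹ • ∑ k ∈ Icc 1 K, u k, xx⟫ -
          gs ((K : ℝ)⁻¹ • ∑ k ∈ Icc 1 K, u k)) ≤
      (1 / (α * ((K : ℝ) + 1))) * (‖x 0 - xx‖ ^ 2 + α ^ 2 * ‖u 0 - uu‖ ^ 2) := by
  intro xx hxx uu huu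
  have hgs := hconj.convexOn
  set z : ℕ → EuclideanSpace ℝ (Fin n) := fun k => (x k - α • u k) - (xx - α • uu) with hz
  have hstep : ∀ k, lagrangian f gs (x (k + 1)) uu - lagrangian f gs xx (u (k + 1)) ≤
      α⁻¹ * ⟪z k - z (k + 1), z (k + 1)⟫ := fun k => by
    simpa only [hz, sub_sub_sub_cancel_right] using drs_step_gap_le hα
      ((hx k).add_inner_le (hf.2.1.smul hα.le) hxx)
      ((hu k).add_inner_le (hgs.smul (inv_nonneg.2 hα.le)) huu)
  have hjensen := (convexOn_lagrangian_sub_lagrangian hf.2.1 hgs xx uu).map_finset_average_le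
    (t := Icc 1 K) (p := fun k => (x k, u k)) (nonempty_Icc.2 hK) fun k hk => by
      obtain ⟨j, rfl⟩ := Nat.exists_eq_add_of_le' (mem_Icc.1 hk).1
      exact ⟨(hx j).1, (hu j).1⟩
  simp only [Nat.card_Icc, Nat.add_sub_cancel, Prod.smul_fst, Prod.smul_snd, Prod.fst_sum,
    Prod.snd_sum] at hjensen
  have hz0 := norm_sub_smul_sub_sub_smul_sq_le α (x 0) xx (u 0) uu
  calc _ ≤ _ := hjensen
    _ ≤ ‖z 0‖ ^ 2 / (2 * α * (K + 1)) :=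
      average_Icc_le_of_le_inner_sub_succ z (G := fun k =>
        lagrangian f gs (x k) uu - lagrangian f gs xx (u k)) hα hstep K
    _ ≤ _ := by
      rw [div_le_iff₀ (by positivity)]
      field_simp
      linarith

/-- Ergodic convergence of DRS-fg: the primal–dual gap of the averaged iterates is
bounded by `(‖x⁰ − x‖² + α²‖u⁰ − u‖²)/(α(K+1))`. -/
theorem drs_fg_ergodic_rate (n K : ℕ) (hK : 1 ≤ K) (α : ℝ) (hα : 0 < α)
    (Df Dg Dgs : Set (EuclideanSpace ℝ (Fin n)))
    (f g gs : EuclideanSpace ℝ (Fin n) → ℝ)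
    (hf : IsCCP Df f) (hg : IsCCP Dg g) (hconj : IsConjugateOn Dg g Dgs gs)
    (x u : ℕ → EuclideanSpace ℝ (Fin n))
    (hx : ∀ k, IsProxOn Df (fun v => α * f v) (x k - α • u k) (x (k + 1)))
    (hu : ∀ k, IsProxOn Dgs (fun v => α⁻¹ * gs v)
      (u k + α⁻¹ • ((2 : ℝ) • x (k + 1) - x k)) (u (k + 1))) :
    ∀ xx ∈ Df, ∀ uu ∈ Dgs,
      (f ((K : ℝ)⁻¹ • ∑ k ∈ Icc 1 K, x k) +
          ⟪uu, (K : ℝ)⁻¹ • ∑ k ∈ Icc 1 K, x k⟫ - gs uu) -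
        (f xx + ⟪(K : ℝ)⁻¹ • ∑ k ∈ Icc 1 K, u k, xx⟫ -
          gs ((K : ℝ)⁻¹ • ∑ k ∈ Icc 1 K, u k)) ≤
      (1 / (α * ((K : ℝ) + 1))) * (‖x 0 - xx‖ ^ 2 + α ^ 2 * ‖u 0 - uu‖ ^ 2) :=
  drs_fg_ergodic_rate_general n K hK α hα Df Dg Dgs f g gs hf hconj x u hx hu
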